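/- arXiv:1310.8146 — 7 statements merged into one kernel-verified Lean document; each statement's English description precedes it below -/
import Mathlib

section
/- For every finite type ι that is nonempty, every vote vector v : ι → ℕ, and every house size h : ℕ, there exists a Sainte-Laguë allocation for (v, h); that is, there exists s : ι → ℕ with ∑ i, s i = h such that for all i j : ι with 1 ≤ s i one has v i * (2 * s j + 1) ≥ v j * (2 * s i - 1). -/
/-- `s` is a Sainte-Laguë allocation for votes `v` and house size `h`. -/
def IsSL {ι : Type*} [Fintype ι] (v : ι → ℕ) (h : ℕ) (s : ι → ℕ) : Prop :=
  (∑ i, s i = h) ∧ ∀ i j, 1 ≤ s i → v i * (2 * s j + 1) ≥ v j * (2 * s i - 1)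

theorem sl_exists {ι : Type*} [Fintype ι] [Nonempty ι] (v : ι → ℕ) (h : ℕ) :
    ∃ s : ι → ℕ, IsSL v h s := by
  induction h with
  | zero =>
    refine ⟨fun _ => 0, by simp, fun i j hi => by simp at hi⟩
  | succ h ih =>
    obtain ⟨s, hsum, hs⟩ := ih
    -- pick j maximizing v j / (2 s j + 1)
    obtain ⟨j, -, hj⟩ := Finset.exists_max_image Finset.univ
      (fun k => (v k : ℚ) / (2 * s k + 1)) ⟨Classical.arbitrary ι, Finset.mem_univ _⟩
    have hjmax : ∀ k, v k * (2 * s j + 1) ≤ v j * (2 * s k + 1) := by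
      intro k
      have := hj k (Finset.mem_univ k)
      have hd1 : (0:ℚ) < 2 * s k + 1 := by positivity
      have hd2 : (0:ℚ) < 2 * s j + 1 := by positivity
      rw [div_le_div_iff₀ hd1 hd2] at this
      exact_mod_cast this
    classical
    refine ⟨Function.update s j (s j + 1), ?_, ?_⟩
    · rw [Finset.sum_update_of_mem (Finset.mem_univ j)]
      rw [Finset.sdiff_singleton_eq_erase]
      rw [← Finset.add_sum_erase _ s (Finset.mem_univ j)] at hsum
      omega
    · intro i k hi
      by_cases hij : i = j
      · subst hij
        rw [Function.update_self]
        have h1 : v i * (2 * s k + 1) ≤ v i * (2 * Function.update s i (s i + 1) k + 1) := by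
          by_cases hk : k = i
          · subst hk; rw [Function.update_self]; nlinarith
          · rw [Function.update_of_ne hk]
        have := hjmax k
        calc v k * (2 * (s i + 1) - 1) = v k * (2 * s i + 1) := by congr 1
          _ ≤ v i * (2 * s k + 1) := this
          _ ≤ _ := h1
      · rw [Function.update_of_ne hij] at hi ⊢
        have h0 := hs i k hi
        by_cases hk : k = j
        · subst hk
          rw [Function.update_self]
          have : v k * (2 * s i - 1) ≤ v i * (2 * s k + 1) := hs i k hi
          nlinarith
        · rw [Function.update_of_ne hk]; exact h0
end

section
/- Suppose v i ≥ 1 for every i, and suppose there are no ties between distinct parties: for all i j : ι with i ≠ j and all k l : ℕ, v i * (2 * l + 1) ≠ v j * (2 * k + 1). Then for every house size h there is at most one Sainte-Laguë allocation for (v, h): if s and t are both Sainte-Laguë allocations for (v, h), then s = t. -/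
/- Since `2 t i + 1 ≤ 2 s i - 1` and `2 s j + 1 ≤ 2 t j - 1`, the min–max inequality of `s` for
`(i, j)` and that of `t` for `(j, i)` chain into a cycle, so all of them are equalities. -/
theorem IsSL.tie_of_lt_of_lt {ι : Type*} [Fintype ι] {v : ι → ℕ} {h h' : ℕ} {s t : ι → ℕ}
    (hs : IsSL v h s) (ht : IsSL v h' t) {i j : ι} (hi : t i < s i) (hj : s j < t j) :
    v i * (2 * (t j - 1) + 1) = v j * (2 * t i + 1) := by
  have hs_ij : v j * (2 * s i - 1) ≤ v i * (2 * s j + 1) := hs.2 i j (by omega)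
  have ht_ji : v i * (2 * t j - 1) ≤ v j * (2 * t i + 1) := ht.2 j i (by omega)
  have hti : v j * (2 * t i + 1) ≤ v j * (2 * s i - 1) := Nat.mul_le_mul_left _ (by omega)
  have hsj : v i * (2 * s j + 1) ≤ v i * (2 * t j - 1) := Nat.mul_le_mul_left _ (by omega)
  rw [show 2 * (t j - 1) + 1 = 2 * t j - 1 by omega]
  omega

theorem exists_lt_of_sum_eq_of_lt {ι : Type*} [Fintype ι] {s t : ι → ℕ}
    (hsum : ∑ k, s k = ∑ k, t k) {i : ι} (hi : t i < s i) : ∃ j, s j < t j := by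
  by_contra! hle
  have hts : ∀ k ∈ Finset.univ, t k = s k :=
    (Finset.sum_eq_sum_iff_of_le fun k _ => hle k).mp hsum.symm
  exact hi.ne (hts i (Finset.mem_univ i))

theorem IsSL.le_of_noTies {ι : Type*} [Fintype ι] {v : ι → ℕ}
    (hties : ∀ i j : ι, i ≠ j → ∀ k l : ℕ, v i * (2 * l + 1) ≠ v j * (2 * k + 1))
    {h : ℕ} {s t : ι → ℕ} (hs : IsSL v h s) (ht : IsSL v h t) (i : ι) : s i ≤ t i := by
  by_contra! hi
  obtain ⟨j, hj⟩ := exists_lt_of_sum_eq_of_lt (hs.1.trans ht.1.symm) hi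
  have hij : i ≠ j := by rintro rfl; omega
  exact hties i j hij (t i) (t j - 1) (hs.tie_of_lt_of_lt ht hi hj)

theorem sl_unique_general {ι : Type*} [Fintype ι] (v : ι → ℕ)
    (hties : ∀ i j : ι, i ≠ j → ∀ k l : ℕ, v i * (2 * l + 1) ≠ v j * (2 * k + 1))
    (h : ℕ) (s t : ι → ℕ) (hs : IsSL v h s) (ht : IsSL v h t) : s = t :=
  funext fun i => le_antisymm (hs.le_of_noTies hties ht i) (ht.le_of_noTies hties hs i)

theorem sl_unique {ι : Type*} [Fintype ι] (v : ι → ℕ)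
    (hv : ∀ i, 1 ≤ v i)
    (hties : ∀ i j : ι, i ≠ j → ∀ k l : ℕ, v i * (2 * l + 1) ≠ v j * (2 * k + 1))
    (h : ℕ) (s t : ι → ℕ) (hs : IsSL v h s) (ht : IsSL v h t) : s = t :=
  sl_unique_general v hties h s t hs ht
end

section
/- Correctness of the greedy (sequential) step of Sainte-Laguë's method: if s is a Sainte-Laguë allocation for (v, h) and i : ι attains the maximal pending comparison number, i.e. for all j : ι one has v i * (2 * s j + 1) ≥ v j * (2 * s i + 1), then the allocation Function.update s i (s i + 1), obtained by giving one more seat to party i, is a Sainte-Laguë allocation for (v, h + 1). -/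
theorem sl_greedy_step {ι : Type*} [Fintype ι] [DecidableEq ι] (v : ι → ℕ) (h : ℕ)
    (s : ι → ℕ) (hs : IsSL v h s) (i : ι)
    (hmax : ∀ j : ι, v i * (2 * s j + 1) ≥ v j * (2 * s i + 1)) :
    IsSL v (h + 1) (Function.update s i (s i + 1)) := by
  obtain ⟨hsum, hineq⟩ := hs
  constructor
  · rw [Finset.sum_update_of_mem (Finset.mem_univ i)]
    rw [Finset.sum_eq_add_sum_sdiff_singleton_of_mem (Finset.mem_univ i) s] at hsum
    omega
  · intro a b ha
    have hkey : 2 * (s i + 1) - 1 = 2 * s i + 1 := by omega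
    simp only [Function.update_apply] at ha ⊢
    by_cases hai : a = i <;> by_cases hbi : b = i <;>
      simp only [hai, hbi, if_true, if_false] at ha ⊢
    · rw [hkey]
      exact Nat.mul_le_mul_left _ (by omega)
    · rw [hkey]
      exact hmax b
    · calc v i * (2 * s a - 1) ≤ v a * (2 * s i + 1) := hineq a i ha
        _ ≤ v a * (2 * (s i + 1) + 1) := Nat.mul_le_mul_left _ (by omega)
    · exact hineq a b ha
end

section
/- House monotonicity of Sainte-Laguë's method (downward step): if s is a Sainte-Laguë allocation for (v, h + 1), then there exists i : ι with 1 ≤ s i such that the allocation Function.update s i (s i - 1), obtained by removing one seat from party i, is a Sainte-Laguë allocation for (v, h). -/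
theorem sl_down_step {ι : Type*} [Fintype ι] [DecidableEq ι] (v : ι → ℕ) (h : ℕ)
    (s : ι → ℕ) (hs : IsSL v (h + 1) s) :
    ∃ i : ι, 1 ≤ s i ∧ IsSL v h (Function.update s i (s i - 1)) := by
  obtain ⟨hsum, hmm⟩ := hs
  have hne : ∃ j, 1 ≤ s j := by
    by_contra hc
    push_neg at hc
    simp only [Nat.lt_one_iff] at hc
    have : ∑ i, s i = 0 := Finset.sum_eq_zero (fun i _ => hc i)
    omega
  obtain ⟨j0, hj0⟩ := hne
  have hT : (Finset.univ.filter (fun j => 1 ≤ s j)).Nonempty :=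
    ⟨j0, by simp [hj0]⟩
  obtain ⟨i, hiT, hmin⟩ :=
    Finset.exists_min_image _ (fun j => (v j : ℚ) / (2 * (s j : ℚ) - 1)) hT
  simp only [Finset.mem_filter, Finset.mem_univ, true_and] at hiT hmin
  -- key cross-multiplied minimality
  have hkey : ∀ a : ι, 1 ≤ s a → v i * (2 * s a - 1) ≤ v a * (2 * s i - 1) := by
    intro a ha
    have h1 := hmin a (by simp [ha])
    have hda : (0 : ℚ) < 2 * (s a : ℚ) - 1 := by
      have : (1 : ℚ) ≤ (s a : ℚ) := by exact_mod_cast ha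
      linarith
    have hdi : (0 : ℚ) < 2 * (s i : ℚ) - 1 := by
      have : (1 : ℚ) ≤ (s i : ℚ) := by exact_mod_cast hiT
      linarith
    rw [div_le_div_iff₀ hdi hda] at h1
    have h2 : (v i : ℚ) * (2 * (s a : ℚ) - 1) ≤ (v a : ℚ) * (2 * (s i : ℚ) - 1) := h1
    have hca : ((2 * s a - 1 : ℕ) : ℚ) = 2 * (s a : ℚ) - 1 := by
      push_cast [Nat.cast_sub (by omega : 1 ≤ 2 * s a)]; ring
    have hci : ((2 * s i - 1 : ℕ) : ℚ) = 2 * (s i : ℚ) - 1 := by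
      push_cast [Nat.cast_sub (by omega : 1 ≤ 2 * s i)]; ring
    have : ((v i * (2 * s a - 1) : ℕ) : ℚ) ≤ ((v a * (2 * s i - 1) : ℕ) : ℚ) := by
      push_cast [hca, hci]
      exact h2
    exact_mod_cast this
  refine ⟨i, hiT, ?_, ?_⟩
  · -- sum
    have h1 : ∑ k, Function.update s i (s i - 1) k
        = (s i - 1) + ∑ k ∈ Finset.univ \ {i}, s k :=
      Finset.sum_update_of_mem (Finset.mem_univ i) s (s i - 1)
    have h2 : s i + ∑ k ∈ Finset.univ \ {i}, s k = h + 1 := by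
      rw [← Finset.sum_eq_add_sum_sdiff_singleton_of_mem (Finset.mem_univ i)]
      exact hsum
    omega
  · intro a b ha
    by_cases hai : a = i
    · subst hai
      rw [Function.update_self] at ha ⊢
      have ha2 : 2 ≤ s a := by omega
      by_cases hbi : b = a
      · subst hbi
        rw [Function.update_self]
        exact Nat.mul_le_mul_left _ (by omega)
      · rw [Function.update_of_ne hbi]
        have := hmm a b (by omega)
        calc v b * (2 * (s a - 1) - 1) ≤ v b * (2 * s a - 1) :=
              Nat.mul_le_mul_left _ (by omega)
          _ ≤ v a * (2 * s b + 1) := this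
    · rw [Function.update_of_ne hai] at ha ⊢
      by_cases hbi : b = i
      · subst hbi
        rw [Function.update_self]
        have := hkey a ha
        have he : 2 * (s b - 1) + 1 = 2 * s b - 1 := by omega
        rw [he]
        exact this
      · rw [Function.update_of_ne hbi]
        exact hmm a b ha
end

section
/- Sainte-Laguë's method avoids the Alabama paradox (prefix property used by the paper to justify minimizing the number of adjustment seats): if s is a Sainte-Laguë allocation for (v, h) and h' ≤ h, then there exists a Sainte-Laguë allocation s' for (v, h') with s' j ≤ s j for every j : ι. In particular, the allocation produced for a shorter list of seats is dominated pointwise by the allocation for a longer list, so the ordering in which entities receive seats does not depend on the total number of seats distributed. -/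
lemma sl_step {ι : Type*} [Fintype ι] (v : ι → ℕ) (n : ℕ) (s : ι → ℕ)
    (hs : IsSL v (n + 1) s) :
    ∃ s' : ι → ℕ, IsSL v n s' ∧ ∀ j : ι, s' j ≤ s j := by
  classical
  obtain ⟨hsum, hineq⟩ := hs
  set T : Finset ι := Finset.univ.filter (fun i => 1 ≤ s i) with hT
  have hTne : T.Nonempty := by
    by_contra hne
    rw [Finset.not_nonempty_iff_eq_empty] at hne
    have : ∑ i, s i = 0 := by
      apply Finset.sum_eq_zero
      intro i _
      by_contra hi
      have : i ∈ T := by simp [hT]; omega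
      simp [hne] at this
    omega
  obtain ⟨i, hiT, hmin⟩ := T.exists_min_image
    (fun i => (v i : ℚ) / ((2 * s i - 1 : ℕ) : ℚ)) hTne
  have hsi : 1 ≤ s i := by simpa [hT] using hiT
  -- key minimality in ℕ form
  have key : ∀ a, 1 ≤ s a → v i * (2 * s a - 1) ≤ v a * (2 * s i - 1) := by
    intro a hsa
    have haT : a ∈ T := by simp [hT, hsa]
    have hq := hmin a haT
    have hdi : (0 : ℚ) < ((2 * s i - 1 : ℕ) : ℚ) := by
      have : 1 ≤ 2 * s i - 1 := by omega
      exact_mod_cast Nat.lt_of_lt_of_le Nat.zero_lt_one this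
    have hda : (0 : ℚ) < ((2 * s a - 1 : ℕ) : ℚ) := by
      have : 1 ≤ 2 * s a - 1 := by omega
      exact_mod_cast Nat.lt_of_lt_of_le Nat.zero_lt_one this
    rw [div_le_div_iff₀ hdi hda] at hq
    exact_mod_cast hq
  refine ⟨Function.update s i (s i - 1), ⟨?_, ?_⟩, ?_⟩
  · rw [Finset.sum_update_of_mem (Finset.mem_univ i)]
    have h2 : ∑ x ∈ Finset.univ, s x
        = ∑ x ∈ Finset.univ \ {i}, s x + s i := by
      rw [Finset.sum_eq_sum_sdiff_singleton_add (Finset.mem_univ i)]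
    omega
  · intro a b ha
    by_cases hai : a = i
    · subst hai
      rw [Function.update_self] at ha ⊢
      by_cases hbi : b = a
      · subst hbi
        rw [Function.update_self]
        exact Nat.mul_le_mul_left _ (by omega)
      · rw [Function.update_of_ne hbi]
        have := hineq a b (by omega)
        calc v b * (2 * (s a - 1) - 1) ≤ v b * (2 * s a - 1) :=
              Nat.mul_le_mul_left _ (by omega)
          _ ≤ v a * (2 * s b + 1) := this
    · rw [Function.update_of_ne hai] at ha ⊢
      by_cases hbi : b = i
      · subst hbi
        rw [Function.update_self]
        have := key a ha
        have h1 : 2 * (s b - 1) + 1 = 2 * s b - 1 := by omega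
        rw [h1]
        linarith [key a ha]
      · rw [Function.update_of_ne hbi]
        exact hineq a b ha
  · intro j
    by_cases hji : j = i
    · subst hji; rw [Function.update_self]; omega
    · rw [Function.update_of_ne hji]

theorem sl_no_alabama {ι : Type*} [Fintype ι] (v : ι → ℕ) (h h' : ℕ)
    (s : ι → ℕ) (hs : IsSL v h s) (hh : h' ≤ h) :
    ∃ s' : ι → ℕ, IsSL v h' s' ∧ ∀ j : ι, s' j ≤ s j := by
  obtain ⟨d, rfl⟩ := Nat.le.dest hh
  clear hh
  induction d generalizing s with
  | zero => exact ⟨s, by simpa using hs, fun j => le_rfl⟩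
  | succ d ih =>
    have : IsSL v ((h' + d) + 1) s := by
      rwa [show h' + (d + 1) = (h' + d) + 1 by omega] at hs
    obtain ⟨s₁, hs₁, hle₁⟩ := sl_step v (h' + d) s this
    obtain ⟨s', hs', hle'⟩ := ih s₁ hs₁
    exact ⟨s', hs', fun j => (hle' j).trans (hle₁ j)⟩
end

section
/- Vote monotonicity of Sainte-Laguë's method at the party level (the reason the dynamic method is monotone for parties): fix j : ι and vote vectors v v' : ι → ℕ with v' j ≥ v j and v' k = v k for all k ≠ j. If s is a Sainte-Laguë allocation for (v, h), then there exists a Sainte-Laguë allocation s' for (v', h) with s' j ≥ s j. In other words, gaining extra votes can never force a party's nationally computed seat total to decrease. -/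
lemma exists_isSL {ι : Type*} [Fintype ι] [Nonempty ι] (v : ι → ℕ) (h : ℕ) :
    ∃ t : ι → ℕ, IsSL v h t := by
  classical
  induction h with
  | zero =>
    refine ⟨fun _ => 0, by simp, ?_⟩
    intro i m hi
    simp at hi
  | succ n ih =>
    obtain ⟨t, hsum, hT⟩ := ih
    obtain ⟨i0, -, hi0⟩ := Finset.exists_max_image Finset.univ
      (fun i => (v i : ℚ) / (2 * t i + 1)) ⟨Classical.arbitrary ι, Finset.mem_univ _⟩
    have key : ∀ m, v m * (2 * t i0 + 1) ≤ v i0 * (2 * t m + 1) := by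
      intro m
      have h1 := hi0 m (Finset.mem_univ m)
      rw [div_le_div_iff₀ (by positivity) (by positivity)] at h1
      exact_mod_cast h1
    refine ⟨fun i => t i + if i = i0 then 1 else 0, ?_, ?_⟩
    · rw [Finset.sum_add_distrib, hsum, Finset.sum_ite_eq' Finset.univ i0 (fun _ => 1)]
      simp
    · intro i m hi
      simp only at hi ⊢
      by_cases him : i = i0
      · simp only [if_pos him] at hi ⊢
        rw [him] at hi ⊢
        by_cases hm : m = i0
        · simp only [if_pos hm]
          rw [hm]
          exact Nat.mul_le_mul (le_refl _) (by omega)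
        · simp only [if_neg hm]
          have e : 2 * (t i0 + 1) - 1 = 2 * t i0 + 1 := by omega
          rw [e]
          exact key m
      · simp only [if_neg him] at hi ⊢
        by_cases hm : m = i0
        · simp only [if_pos hm]
          rw [hm]
          have h1 := hT i i0 hi
          calc v i0 * (2 * t i - 1) ≤ v i * (2 * t i0 + 1) := h1
            _ ≤ v i * (2 * (t i0 + 1) + 1) := Nat.mul_le_mul (le_refl _) (by omega)
        · simp only [if_neg hm]
          exact hT i m hi

lemma sl_swap {ι : Type*} [Fintype ι] (j : ι) (v v' : ι → ℕ)
    (hj : v' j ≥ v j) (hother : ∀ k : ι, k ≠ j → v' k = v k)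
    (h : ℕ) (s t : ι → ℕ) (hs : IsSL v h s) (ht : IsSL v' h t) (hlt : t j < s j) :
    ∃ t' : ι → ℕ, IsSL v' h t' ∧ t' j = t j + 1 := by
  classical
  obtain ⟨hssum, hS⟩ := hs
  obtain ⟨htsum, hT⟩ := ht
  have hex : ∃ k, s k < t k := by
    by_contra hc
    push_neg at hc
    have := Finset.sum_lt_sum (fun i (_ : i ∈ Finset.univ) => hc i)
      ⟨j, Finset.mem_univ j, hlt⟩
    omega
  obtain ⟨k, hk⟩ := hex
  have hkj : k ≠ j := by rintro rfl; omega
  have htk : 1 ≤ t k := by omega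
  have hsj : 1 ≤ s j := by omega
  have h1 : v' j * (2 * t k - 1) ≤ v' k * (2 * t j + 1) := hT k j htk
  have h2 : v' k * (2 * t j + 1) ≤ v' j * (2 * t k - 1) := by
    have c1 : v k * (2 * s j - 1) ≤ v j * (2 * s k + 1) := hS j k hsj
    calc v' k * (2 * t j + 1) = v k * (2 * t j + 1) := by rw [hother k hkj]
      _ ≤ v k * (2 * s j - 1) := Nat.mul_le_mul (le_refl _) (by omega)
      _ ≤ v j * (2 * s k + 1) := c1
      _ ≤ v' j * (2 * s k + 1) := Nat.mul_le_mul hj (le_refl _)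
      _ ≤ v' j * (2 * t k - 1) := Nat.mul_le_mul (le_refl _) (by omega)
  have hA : v' k * (2 * t j + 1) = v' j * (2 * t k - 1) := le_antisymm h2 h1
  refine ⟨fun i => if i = j then t i + 1 else if i = k then t i - 1 else t i, ⟨?_, ?_⟩,
    by simp⟩
  · -- sum
    show (∑ i, if i = j then t i + 1 else if i = k then t i - 1 else t i) = h
    have key : ∀ i, (if i = j then t i + 1 else if i = k then t i - 1 else t i)
        + (if i = k then 1 else 0) = t i + (if i = j then 1 else 0) := by
      intro i
      by_cases hij : i = j
      · simp [hij, Ne.symm hkj]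
      · by_cases hik : i = k
        · simp [hij, hik, hkj]; omega
        · simp [hij, hik]
    have hsum1 : (∑ i, ((if i = j then t i + 1 else if i = k then t i - 1 else t i)
        + (if i = k then 1 else 0))) = (∑ i, (t i + (if i = j then 1 else 0))) :=
      Finset.sum_congr rfl (fun i _ => key i)
    rw [Finset.sum_add_distrib, Finset.sum_add_distrib,
      Finset.sum_ite_eq' Finset.univ k (fun _ => 1),
      Finset.sum_ite_eq' Finset.univ j (fun _ => 1)] at hsum1
    simp only [Finset.mem_univ, if_pos] at hsum1
    omega
  · intro i m hi
    simp only at hi ⊢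
    by_cases hij : i = j
    · simp only [if_pos hij] at hi ⊢
      rw [hij] at hi ⊢
      by_cases hmj : m = j
      · simp only [if_pos hmj]
        rw [hmj]
        exact Nat.mul_le_mul (le_refl _) (by omega)
      · by_cases hmk : m = k
        · simp only [if_neg hmj, if_pos hmk]
          rw [hmk]
          have e1 : 2 * (t k - 1) + 1 = 2 * t k - 1 := by omega
          have e2 : 2 * (t j + 1) - 1 = 2 * t j + 1 := by omega
          rw [e1, e2]
          exact hA.le
        · simp only [if_neg hmj, if_neg hmk]
          have e2 : 2 * (t j + 1) - 1 = 2 * t j + 1 := by omega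
          rw [e2]
          -- want v' m * (2 * t j + 1) ≤ v' j * (2 * t m + 1)
          have hkm : v' m * (2 * t k - 1) ≤ v' k * (2 * t m + 1) := hT k m htk
          set a := 2 * t k - 1 with ha
          have hmul : a * (v' m * (2 * t j + 1)) ≤ a * (v' j * (2 * t m + 1)) := by
            calc a * (v' m * (2 * t j + 1)) = (v' m * a) * (2 * t j + 1) := by ring
              _ ≤ (v' k * (2 * t m + 1)) * (2 * t j + 1) :=
                  Nat.mul_le_mul hkm (le_refl _)
              _ = (v' k * (2 * t j + 1)) * (2 * t m + 1) := by ring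
              _ = (v' j * a) * (2 * t m + 1) := by rw [hA]
              _ = a * (v' j * (2 * t m + 1)) := by ring
          exact Nat.le_of_mul_le_mul_left hmul (by omega)
    · by_cases hik : i = k
      · simp only [if_neg hij, if_pos hik] at hi ⊢
        rw [hik] at hi ⊢
        have htk2 : 2 ≤ t k := by omega
        by_cases hmj : m = j
        · simp only [if_pos hmj]
          rw [hmj]
          calc v' j * (2 * (t k - 1) - 1) ≤ v' j * (2 * t k - 1) :=
              Nat.mul_le_mul (le_refl _) (by omega)
            _ = v' k * (2 * t j + 1) := hA.symm
            _ ≤ v' k * (2 * (t j + 1) + 1) := Nat.mul_le_mul (le_refl _) (by omega)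
        · by_cases hmk : m = k
          · simp only [if_neg hmj, if_pos hmk]
            rw [hmk]
            exact Nat.mul_le_mul (le_refl _) (by omega)
          · simp only [if_neg hmj, if_neg hmk]
            calc v' m * (2 * (t k - 1) - 1) ≤ v' m * (2 * t k - 1) :=
                Nat.mul_le_mul (le_refl _) (by omega)
              _ ≤ v' k * (2 * t m + 1) := hT k m htk
      · simp only [if_neg hij, if_neg hik] at hi ⊢
        by_cases hmj : m = j
        · simp only [if_pos hmj]
          rw [hmj]
          calc v' j * (2 * t i - 1) ≤ v' i * (2 * t j + 1) := hT i j hi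
            _ ≤ v' i * (2 * (t j + 1) + 1) := Nat.mul_le_mul (le_refl _) (by omega)
        · by_cases hmk : m = k
          · simp only [if_neg hmj, if_pos hmk]
            rw [hmk]
            have e1 : 2 * (t k - 1) + 1 = 2 * t k - 1 := by omega
            rw [e1]
            -- want v' k * (2 * t i - 1) ≤ v' i * (2 * t k - 1)
            have hij' : v' j * (2 * t i - 1) ≤ v' i * (2 * t j + 1) := hT i j hi
            set a := 2 * t k - 1 with ha
            set b := 2 * t j + 1 with hb
            have hmul : b * (v' k * (2 * t i - 1)) ≤ b * (v' i * a) := by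
              calc b * (v' k * (2 * t i - 1)) = (v' k * b) * (2 * t i - 1) := by ring
                _ = (v' j * a) * (2 * t i - 1) := by rw [hA]
                _ = (v' j * (2 * t i - 1)) * a := by ring
                _ ≤ (v' i * b) * a := Nat.mul_le_mul hij' (le_refl _)
                _ = b * (v' i * a) := by ring
            exact Nat.le_of_mul_le_mul_left hmul (by omega)
          · simp only [if_neg hmj, if_neg hmk]
            exact hT i m hi

theorem sl_vote_monotone {ι : Type*} [Fintype ι] (j : ι) (v v' : ι → ℕ)
    (hj : v' j ≥ v j) (hother : ∀ k : ι, k ≠ j → v' k = v k)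
    (h : ℕ) (s : ι → ℕ) (hs : IsSL v h s) :
    ∃ s' : ι → ℕ, IsSL v' h s' ∧ s' j ≥ s j := by
  haveI : Nonempty ι := ⟨j⟩
  obtain ⟨t0, ht0⟩ := exists_isSL v' h
  suffices H : ∀ n : ℕ, ∀ t : ι → ℕ, IsSL v' h t → s j ≤ t j + n →
      ∃ t' : ι → ℕ, IsSL v' h t' ∧ s j ≤ t' j by
    obtain ⟨t', ht', hle⟩ := H (s j) t0 ht0 (by omega)
    exact ⟨t', ht', hle⟩
  intro n
  induction n with
  | zero => exact fun t ht hle => ⟨t, ht, by omega⟩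
  | succ n ih =>
    intro t ht hle
    by_cases hc : s j ≤ t j
    · exact ⟨t, ht, hc⟩
    · obtain ⟨t', ht', hj'⟩ := sl_swap j v v' hj hother h s t hs ht (by omega)
      exact ih t' ht' (by omega)
end

section
/- Sainte-Laguë allocations are exactly the minimizers of the Sainte-Laguë disproportionality measure: assume v i ≥ 1 for every i : ι and let h : ℕ. Then s : ι → ℕ with ∑ i, s i = h is a Sainte-Laguë allocation for (v, h) if and only if for every t : ι → ℕ with ∑ i, t i = h one has ∑ i, ((s i : ℝ)^2 / (v i : ℝ)) ≤ ∑ i, ((t i : ℝ)^2 / (v i : ℝ)). (Since ∑ s = ∑ t = h, minimizing ∑ (s i)² / v i is equivalent to minimizing the measure E_SL = 100 · ∑ i (v i / V)⁻¹ · ((v i / V) − (s i / h))², where V = ∑ i, v i.) -/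
theorem sl_iff_minimizer {ι : Type*} [Fintype ι] (v : ι → ℕ)
    (hv : ∀ i, 1 ≤ v i) (h : ℕ) (s : ι → ℕ) (hsum : ∑ i, s i = h) :
    IsSL v h s ↔
      ∀ t : ι → ℕ, ∑ i, t i = h →
        ∑ i, ((s i : ℝ) ^ 2 / (v i : ℝ)) ≤ ∑ i, ((t i : ℝ) ^ 2 / (v i : ℝ)) := by
  classical
  have hvR : ∀ i, (0:ℝ) < v i := fun i => by exact_mod_cast hv i
  constructor
  · rintro ⟨-, hsl⟩ t ht
    -- choose the "divisor" L
    obtain ⟨L, hA, hB⟩ : ∃ L : ℝ,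
        (∀ i, 1 ≤ s i → 2*(s i:ℝ) - 1 ≤ L * v i) ∧ (∀ j, L * v j ≤ 2*(s j:ℝ) + 1) := by
      by_cases hne : ∃ i, 1 ≤ s i
      · obtain ⟨i0, hi0⟩ := hne
        obtain ⟨k, hk, hkmax⟩ := Finset.exists_max_image
          (Finset.univ.filter (fun i => 1 ≤ s i)) (fun i => (2*(s i:ℝ) - 1)/(v i))
          ⟨i0, by simp [hi0]⟩
        simp only [Finset.mem_filter, Finset.mem_univ, true_and] at hk
        refine ⟨(2*(s k:ℝ) - 1)/(v k), ?_, ?_⟩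
        · intro i hi
          have := hkmax i (by simp [hi])
          rw [div_le_div_iff₀ (hvR i) (hvR k)] at this
          rw [div_mul_eq_mul_div, le_div_iff₀ (hvR k)]
          linarith [this]
        · intro j
          have hnat := hsl k j hk
          have hcast : ((2 * s k - 1 : ℕ) : ℝ) = 2*(s k:ℝ) - 1 := by
            have : 1 ≤ 2 * s k := by omega
            push_cast [Nat.cast_sub this]; ring
          have hR : (v j:ℝ) * (2*(s k:ℝ) - 1) ≤ (v k:ℝ) * (2*(s j:ℝ) + 1) := by
            have := hnat
            rw [ge_iff_le] at this
            have := (Nat.cast_le (α := ℝ)).2 this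
            push_cast at this
            rw [hcast] at this
            linarith [this]
          rw [div_mul_eq_mul_div, div_le_iff₀ (hvR k)]
          nlinarith [hR]
      · refine ⟨0, fun i hi => absurd ⟨i, hi⟩ hne, fun j => ?_⟩
        have h1 : (0:ℝ) ≤ (s j:ℝ) := Nat.cast_nonneg _
        nlinarith
    have key : ∀ i, (s i:ℝ)^2/(v i) + L*((t i:ℝ) - s i) ≤ (t i:ℝ)^2/(v i) := by
      intro i
      have hvi := hvR i
      have H : (s i:ℝ)^2 + L*(v i)*((t i:ℝ) - s i) ≤ (t i:ℝ)^2 := by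
        rcases le_or_gt (s i) (t i) with hle | hlt
        · rcases eq_or_lt_of_le hle with heq | hlt1
          · rw [heq]; ring_nf; simp
          · have h1 : (s i:ℝ) + 1 ≤ t i := by exact_mod_cast hlt1
            have hBi := hB i
            nlinarith [mul_nonneg (by linarith : (0:ℝ) ≤ (t i:ℝ) - s i)
                (by linarith : (0:ℝ) ≤ (t i:ℝ) - s i - 1),
              mul_nonneg (by linarith : (0:ℝ) ≤ 2*(s i:ℝ) + 1 - L*v i)
                (by linarith : (0:ℝ) ≤ (t i:ℝ) - s i)]
        · have hsi : 1 ≤ s i := by omega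
          have h1 : (t i:ℝ) + 1 ≤ s i := by exact_mod_cast hlt
          have hAi := hA i hsi
          nlinarith [mul_nonneg (by linarith : (0:ℝ) ≤ (s i:ℝ) - t i)
              (by linarith : (0:ℝ) ≤ (s i:ℝ) - t i - 1),
            mul_nonneg (by linarith : (0:ℝ) ≤ L*v i - (2*(s i:ℝ) - 1))
              (by linarith : (0:ℝ) ≤ (s i:ℝ) - t i)]
      calc (s i:ℝ)^2/(v i) + L*((t i:ℝ) - s i)
          = ((s i:ℝ)^2 + L*(v i)*((t i:ℝ) - s i))/(v i) := by field_simp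
        _ ≤ (t i:ℝ)^2/(v i) := (div_le_div_iff_of_pos_right hvi).2 H
    have hsumR : ∑ i, ((s i:ℝ)^2/(v i) + L*((t i:ℝ) - s i)) ≤ ∑ i, (t i:ℝ)^2/(v i) :=
      Finset.sum_le_sum fun i _ => key i
    have hts : ∑ i, (t i : ℝ) = ∑ i, (s i : ℝ) := by
      rw [← Nat.cast_sum, ← Nat.cast_sum, ht, hsum]
    rw [Finset.sum_add_distrib, ← Finset.mul_sum, Finset.sum_sub_distrib, hts] at hsumR
    simpa using hsumR
  · intro hmin
    refine ⟨hsum, fun i j hsi => ?_⟩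
    by_cases hij : i = j
    · subst hij
      exact Nat.mul_le_mul_left _ (by omega)
    · set t : ι → ℕ := fun k => if k = i then s i - 1 else if k = j then s j + 1 else s k
        with htdef
      have hts : ∑ k, t k = h := by
        have hpt : ∀ k, t k + (if k = i then 1 else 0) = s k + (if k = j then 1 else 0) := by
          intro k
          by_cases hk : k = i
          · subst hk
            simp [htdef, hij]
            omega
          · by_cases hk2 : k = j
            · subst hk2
              simp [htdef, hk]
            · simp [htdef, hk, hk2]
        have h1 : ∑ k, (t k + (if k = i then 1 else 0))
            = ∑ k, (s k + if k = j then 1 else 0) :=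
          Finset.sum_congr rfl fun k _ => hpt k
        rw [Finset.sum_add_distrib, Finset.sum_add_distrib,
          Finset.sum_ite_eq' Finset.univ i (fun _ => 1),
          Finset.sum_ite_eq' Finset.univ j (fun _ => 1)] at h1
        simp at h1
        omega
      have key := hmin t hts
      have hzero : ∀ k ∈ Finset.univ, k ∉ ({i, j} : Finset ι) →
          ((t k:ℝ)^2/(v k) - (s k:ℝ)^2/(v k)) = 0 := by
        intro k _ hk
        simp only [Finset.mem_insert, Finset.mem_singleton, not_or] at hk
        simp [htdef, hk.1, hk.2]
      have h0 : (0:ℝ) ≤ ∑ k, ((t k:ℝ)^2/(v k) - (s k:ℝ)^2/(v k)) := by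
        rw [Finset.sum_sub_distrib]
        linarith [key]
      rw [← Finset.sum_subset (Finset.subset_univ ({i, j} : Finset ι)) hzero,
        Finset.sum_pair hij] at h0
      have hti : (t i : ℝ) = (s i:ℝ) - 1 := by
        simp only [htdef, if_pos rfl]
        rw [Nat.cast_sub hsi]; simp
      have htj : (t j : ℝ) = (s j:ℝ) + 1 := by
        simp only [htdef, if_neg (Ne.symm hij), if_pos rfl]
        push_cast; ring
      rw [hti, htj] at h0
      have hR : (v j:ℝ) * (2*(s i:ℝ) - 1) ≤ (v i:ℝ) * (2*(s j:ℝ) + 1) := by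
        have hvi := hvR i
        have hvj := hvR j
        rw [div_sub_div_same, div_sub_div_same,
          div_add_div _ _ (ne_of_gt hvi) (ne_of_gt hvj),
          le_div_iff₀ (mul_pos hvi hvj)] at h0
        nlinarith [h0]
      have hcast : ((2 * s i - 1 : ℕ) : ℝ) = 2*(s i:ℝ) - 1 := by
        have : 1 ≤ 2 * s i := by omega
        push_cast [Nat.cast_sub this]; ring
      rw [ge_iff_le, ← Nat.cast_le (α := ℝ)]
      push_cast [hcast]
      linarith [hR]
end
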